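/- arXiv:2504.21350 — 2 statements merged into one kernel-verified Lean document; each statement's English description precedes it below -/
import Mathlib

section
/- There exists a real constant c ≠ 0, independent of k and l, such that for all k, l ∈ ℤ²₊ with k ≠ l the vector field b(e_k⁰, e_l¹) + b(e_l¹, e_k⁰) − b(e_l⁰, e_k¹) − b(e_k¹, e_l⁰) equals a(k,l) · c · ((|k|² − |l|²)/|k−l|) · e⁰_{k−l} modulo a gradient. (This is the second identity of the velocity-direction Lie bracket lemma: J_{k,l}^{0,1} − J_{l,k}^{0,1} = a c ((−|l|²+|k|²)/|k−l|) ψ⁰_{k−l}.) -/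
/-- Euclidean norm of an integer lattice vector `k ∈ ℤ²`. -/
noncomputable def knorm (k : ℤ × ℤ) : ℝ := Real.sqrt ((k.1 : ℝ) ^ 2 + (k.2 : ℝ) ^ 2)

/-- The phase `k ⋅ x = k₁ x₁ + k₂ x₂`. -/
noncomputable def phase (k : ℤ × ℤ) (x : ℝ × ℝ) : ℝ := (k.1 : ℝ) * x.1 + (k.2 : ℝ) * x.2

/-- The divergence-free trigonometric vector field
`e_k⁰(x) = |k|⁻¹ (k₂, −k₁) cos(k ⋅ x)`. -/
noncomputable def e0 (k : ℤ × ℤ) (x : ℝ × ℝ) : ℝ × ℝ :=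
  (((k.2 : ℝ) / knorm k) * Real.cos (phase k x),
   ((-(k.1 : ℝ)) / knorm k) * Real.cos (phase k x))

/-- The divergence-free trigonometric vector field
`e_k¹(x) = |k|⁻¹ (−k₂, k₁) sin(k ⋅ x)`. -/
noncomputable def e1 (k : ℤ × ℤ) (x : ℝ × ℝ) : ℝ × ℝ :=
  (((-(k.2 : ℝ)) / knorm k) * Real.sin (phase k x),
   ((k.1 : ℝ) / knorm k) * Real.sin (phase k x))

/-- The advection operator `b(u,v) = (u ⋅ ∇)v`, i.e. the derivative of `v`
in the direction `u(x)`. -/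
noncomputable def advect (u v : ℝ × ℝ → ℝ × ℝ) (x : ℝ × ℝ) : ℝ × ℝ :=
  fderiv ℝ v x (u x)

/-- The coefficient `a(k,l) = ⟨k, l^⊥⟩ / (|k| |l|)` with `l^⊥ = (−l₂, l₁)`. -/
noncomputable def acoef (k l : ℤ × ℤ) : ℝ :=
  ((k.1 : ℝ) * (-(l.2 : ℝ)) + (k.2 : ℝ) * (l.1 : ℝ)) / (knorm k * knorm l)

/-- The half lattice `ℤ²₊ = {j ∈ ℤ² \ {0} : j₁ > 0, or j₁ = 0 and j₂ > 0}`. -/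
def Zpos : Set (ℤ × ℤ) := {j | 0 < j.1 ∨ (j.1 = 0 ∧ 0 < j.2)}

/-- `F` equals `G` modulo a gradient: there exists a smooth `2π`-periodic
function `p : ℝ² → ℝ` with `F = G + ∇p`. -/
def EqModGrad (F G : ℝ × ℝ → ℝ × ℝ) : Prop :=
  ∃ p : ℝ × ℝ → ℝ, ContDiff ℝ (⊤ : ℕ∞) p ∧
    (∀ x : ℝ × ℝ, p (x.1 + 2 * Real.pi, x.2) = p x ∧ p (x.1, x.2 + 2 * Real.pi) = p x) ∧
    ∀ x : ℝ × ℝ, F x = G x + (fderiv ℝ p x (1, 0), fderiv ℝ p x (0, 1))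

noncomputable def Lk (k : ℤ × ℤ) : (ℝ × ℝ) →L[ℝ] ℝ :=
  (k.1 : ℝ) • ContinuousLinearMap.fst ℝ ℝ ℝ + (k.2 : ℝ) • ContinuousLinearMap.snd ℝ ℝ ℝ

lemma Lk_apply (k : ℤ × ℤ) (v : ℝ × ℝ) : Lk k v = (k.1:ℝ) * v.1 + (k.2:ℝ) * v.2 := by
  simp [Lk]

lemma hasFDerivAt_phase (k : ℤ × ℤ) (x : ℝ × ℝ) : HasFDerivAt (phase k) (Lk k) x := by
  have h1 : HasFDerivAt (fun x : ℝ × ℝ => (k.1:ℝ) * x.1) ((k.1:ℝ) • ContinuousLinearMap.fst ℝ ℝ ℝ) x :=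
    (hasFDerivAt_fst (𝕜 := ℝ)).const_mul _
  have h2 : HasFDerivAt (fun x : ℝ × ℝ => (k.2:ℝ) * x.2) ((k.2:ℝ) • ContinuousLinearMap.snd ℝ ℝ ℝ) x :=
    (hasFDerivAt_snd (𝕜 := ℝ)).const_mul _
  exact h1.add h2

lemma hasFDerivAt_csin (c : ℝ) (k : ℤ × ℤ) (x : ℝ × ℝ) :
    HasFDerivAt (fun x => c * Real.sin (phase k x)) ((c * Real.cos (phase k x)) • Lk k) x := by
  have h := ((Real.hasDerivAt_sin (phase k x)).comp_hasFDerivAt x (hasFDerivAt_phase k x)).const_mul c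
  rw [mul_smul]; exact h

lemma hasFDerivAt_ccos (c : ℝ) (k : ℤ × ℤ) (x : ℝ × ℝ) :
    HasFDerivAt (fun x => c * Real.cos (phase k x)) ((-(c * Real.sin (phase k x))) • Lk k) x := by
  have h := ((Real.hasDerivAt_cos (phase k x)).comp_hasFDerivAt x (hasFDerivAt_phase k x)).const_mul c
  rw [← mul_neg, mul_smul]; exact h

lemma fderiv_e0_apply (k : ℤ × ℤ) (x v : ℝ × ℝ) :
    fderiv ℝ (e0 k) x v =
      ((-(((k.2:ℝ) / knorm k) * Real.sin (phase k x))) * ((k.1:ℝ) * v.1 + (k.2:ℝ) * v.2),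
       (-(((-(k.1:ℝ)) / knorm k) * Real.sin (phase k x))) * ((k.1:ℝ) * v.1 + (k.2:ℝ) * v.2)) := by
  have h := (HasFDerivAt.prodMk (hasFDerivAt_ccos ((k.2:ℝ) / knorm k) k x)
    (hasFDerivAt_ccos ((-(k.1:ℝ)) / knorm k) k x))
  have h2 : fderiv ℝ (e0 k) x = _ := h.fderiv
  rw [h2]
  simp [Lk_apply, mul_comm]

lemma fderiv_e1_apply (k : ℤ × ℤ) (x v : ℝ × ℝ) :
    fderiv ℝ (e1 k) x v =
      ((((-(k.2:ℝ)) / knorm k) * Real.cos (phase k x)) * ((k.1:ℝ) * v.1 + (k.2:ℝ) * v.2),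
       (((k.1:ℝ) / knorm k) * Real.cos (phase k x)) * ((k.1:ℝ) * v.1 + (k.2:ℝ) * v.2)) := by
  have h := (HasFDerivAt.prodMk (hasFDerivAt_csin ((-(k.2:ℝ)) / knorm k) k x)
    (hasFDerivAt_csin ((k.1:ℝ) / knorm k) k x))
  have h2 : fderiv ℝ (e1 k) x = _ := h.fderiv
  rw [h2]
  simp [Lk_apply, mul_comm]

lemma knorm_pos {k : ℤ × ℤ} (h : k ≠ 0) : 0 < knorm k := by
  apply Real.sqrt_pos.mpr
  rcases eq_or_ne k.1 0 with h1 | h1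
  · rcases eq_or_ne k.2 0 with h2 | h2
    · exact absurd (Prod.ext h1 h2) h
    · have : (k.2:ℝ) ≠ 0 := Int.cast_ne_zero.mpr h2
      positivity
  · have : (k.1:ℝ) ≠ 0 := Int.cast_ne_zero.mpr h1
    positivity

lemma knorm_sq (k : ℤ × ℤ) : knorm k ^ 2 = (k.1:ℝ)^2 + (k.2:ℝ)^2 :=
  Real.sq_sqrt (by positivity)

lemma Zpos_ne_zero {k : ℤ × ℤ} (h : k ∈ Zpos) : k ≠ 0 := by
  rintro rfl
  rcases h with h | ⟨_, h⟩ <;> exact absurd h (lt_irrefl _)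

lemma scalar1 (k1 k2 l1 l2 M : ℝ) (hM : M ≠ 0) (hM2 : M^2 = (k1-l1)^2+(k2-l2)^2) :
    (-1) * (((k1^2+k2^2) - (l1^2+l2^2))/M) * ((k2-l2)/M)
      + ((-(k2+l2)*(k1-l1) + (k1+l1)*(k2-l2))/M^2) * (k1-l1) = -(k2+l2) := by
  field_simp
  linear_combination (k2+l2) * hM2

lemma scalar2 (k1 k2 l1 l2 M : ℝ) (hM : M ≠ 0) (hM2 : M^2 = (k1-l1)^2+(k2-l2)^2) :
    (-1) * (((k1^2+k2^2) - (l1^2+l2^2))/M) * ((-(k1-l1))/M)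
      + ((-(k2+l2)*(k1-l1) + (k1+l1)*(k2-l2))/M^2) * (k2-l2) = (k1+l1) := by
  field_simp
  linear_combination (-(k1+l1)) * hM2

theorem velocity_lie_bracket_sum_minus :
    ∃ c : ℝ, c ≠ 0 ∧ ∀ k l : ℤ × ℤ, k ∈ Zpos → l ∈ Zpos → k ≠ l →
      EqModGrad
        (fun x => advect (e0 k) (e1 l) x + advect (e1 l) (e0 k) x - advect (e0 l) (e1 k) x - advect (e1 k) (e0 l) x)
        (fun x => (acoef k l * c * ((knorm k ^ 2 - knorm l ^ 2) / knorm (k - l))) • e0 (k - l) x) := by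
  refine ⟨-1, by norm_num, ?_⟩
  intro k l hk hl hkl
  have hk0 : k ≠ 0 := Zpos_ne_zero hk
  have hl0 : l ≠ 0 := Zpos_ne_zero hl
  have hm0 : k - l ≠ 0 := sub_ne_zero.mpr hkl
  have hKpos := knorm_pos hk0
  have hLpos := knorm_pos hl0
  have hMpos := knorm_pos hm0
  set γ : ℝ := acoef k l *
    ((-((k.2:ℝ) + (l.2:ℝ))) * ((k.1:ℝ) - (l.1:ℝ)) + ((k.1:ℝ) + (l.1:ℝ)) * ((k.2:ℝ) - (l.2:ℝ))) /
    knorm (k - l) ^ 2 with hγ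
  refine ⟨fun x => γ * Real.sin (phase (k - l) x), ?_, ?_, ?_⟩
  · have hph : ContDiff ℝ (⊤ : ℕ∞) (phase (k - l)) := by
      unfold phase; fun_prop
    exact contDiff_const.mul (Real.contDiff_sin.comp hph)
  · intro x
    constructor
    · have h1 : phase (k - l) (x.1 + 2 * Real.pi, x.2)
          = phase (k - l) x + ((k - l).1 : ℝ) * (2 * Real.pi) := by
        simp only [phase]; ring
      simp only [h1, Real.sin_add_int_mul_two_pi]
    · have h1 : phase (k - l) (x.1, x.2 + 2 * Real.pi)
          = phase (k - l) x + ((k - l).2 : ℝ) * (2 * Real.pi) := by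
        simp only [phase]; ring
      simp only [h1, Real.sin_add_int_mul_two_pi]
  · intro x
    have hp : fderiv ℝ (fun x => γ * Real.sin (phase (k - l) x)) x
        = (γ * Real.cos (phase (k - l) x)) • Lk (k - l) :=
      (hasFDerivAt_csin γ (k - l) x).fderiv
    have hc : Real.cos (phase (k - l) x)
        = Real.cos (phase k x) * Real.cos (phase l x)
          + Real.sin (phase k x) * Real.sin (phase l x) := by
      have h : phase (k - l) x = phase k x - phase l x := by
        simp only [phase, Prod.fst_sub, Prod.snd_sub]
        push_cast; ring
      rw [h, Real.cos_sub]
    simp only [advect, fderiv_e0_apply, fderiv_e1_apply, e0, e1, hp,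
      ContinuousLinearMap.coe_smul', Pi.smul_apply, Lk_apply, smul_eq_mul,
      Prod.mk_add_mk, Prod.mk_sub_mk, Prod.smul_mk, Prod.mk.injEq,
      Prod.fst_sub, Prod.snd_sub]
    push_cast
    rw [hγ, acoef, hc]
    rw [knorm_sq k, knorm_sq l]
    have hM2 : knorm (k - l) ^ 2 = ((k.1:ℝ) - (l.1:ℝ))^2 + ((k.2:ℝ) - (l.2:ℝ))^2 := by
      rw [knorm_sq]; push_cast [Prod.fst_sub, Prod.snd_sub]; ring
    have hsc1 := scalar1 (k.1:ℝ) (k.2:ℝ) (l.1:ℝ) (l.2:ℝ) (knorm (k-l)) hMpos.ne' hM2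
    have hsc2 := scalar2 (k.1:ℝ) (k.2:ℝ) (l.1:ℝ) (l.2:ℝ) (knorm (k-l)) hMpos.ne' hM2
    constructor
    · trans (((k.1:ℝ) * -(l.2:ℝ) + (k.2:ℝ) * (l.1:ℝ)) / (knorm k * knorm l)
        * (-((k.2:ℝ) + (l.2:ℝ)))
        * (Real.cos (phase k x) * Real.cos (phase l x)
           + Real.sin (phase k x) * Real.sin (phase l x)))
      · field_simp
        ring
      · linear_combination (-((((k.1:ℝ) * -(l.2:ℝ) + (k.2:ℝ) * (l.1:ℝ)) / (knorm k * knorm l))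
          * (Real.cos (phase k x) * Real.cos (phase l x)
             + Real.sin (phase k x) * Real.sin (phase l x)))) * hsc1
    · trans (((k.1:ℝ) * -(l.2:ℝ) + (k.2:ℝ) * (l.1:ℝ)) / (knorm k * knorm l)
        * ((k.1:ℝ) + (l.1:ℝ))
        * (Real.cos (phase k x) * Real.cos (phase l x)
           + Real.sin (phase k x) * Real.sin (phase l x)))
      · field_simp
        ring
      · linear_combination (-((((k.1:ℝ) * -(l.2:ℝ) + (k.2:ℝ) * (l.1:ℝ)) / (knorm k * knorm l))
          * (Real.cos (phase k x) * Real.cos (phase l x)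
             + Real.sin (phase k x) * Real.sin (phase l x)))) * hsc2
end

section
/- Let ℓ ∈ 𝕊 with η¹ < ∞. Then the map ε ↦ η^ε is nondecreasing on (0,1] (so η^ε decreases as ε decreases to 0), lim_{ε→0+} η^ε = η, and lim_{ε→0+} ℓ^ε(η^ε) = ℓ(η). -/
open MeasureTheory Filter

/-- Membership in `𝕊`: a càdlàg nondecreasing function `ℓ : [0,∞) → [0,∞)` with
`ℓ(0) = 0`, extended by `0` to the negative half-line. -/
def MemS (ℓ : ℝ → ℝ) : Prop :=
  (∀ t : ℝ, t ≤ 0 → ℓ t = 0) ∧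
  (∀ t : ℝ, 0 ≤ ℓ t) ∧
  Monotone ℓ ∧
  (∀ t : ℝ, ContinuousWithinAt ℓ (Set.Ici t) t) ∧
  (∀ t : ℝ, ∃ L : ℝ, Tendsto ℓ (nhdsWithin t (Set.Iio t)) (nhds L))

/-- The regularization `ℓ^ε(t) = (1/ε) ∫_t^{t+ε} ℓ(s) ds + ε t`. -/
noncomputable def reg (ℓ : ℝ → ℝ) (ε t : ℝ) : ℝ :=
  (1 / ε) * (∫ s in t..(t + ε), ℓ s) + ε * t

/-- The first passage time `η^ε = inf{t ≥ 0 : ν t − c ℓ^ε(t) > 1}`. -/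
noncomputable def etaEps (ℓ : ℝ → ℝ) (ν c ε : ℝ) : ℝ :=
  sInf {t : ℝ | 0 ≤ t ∧ 1 < ν * t - c * reg ℓ ε t}

/-- The first passage time `η = inf{t ≥ 0 : ν t − c ℓ(t) > 1}`. -/
noncomputable def eta (ℓ : ℝ → ℝ) (ν c : ℝ) : ℝ :=
  sInf {t : ℝ | 0 ≤ t ∧ 1 < ν * t - c * ℓ t}


lemma int_le_aux (ℓ : ℝ → ℝ) (hm : Monotone ℓ) {ε : ℝ} (hε : 0 ≤ ε) (t : ℝ) :
    ∫ s in t..(t + ε), ℓ s ≤ ε * ℓ (t + ε) := by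
  have h1 : (∫ s in t..(t + ε), ℓ s) ≤ ∫ _ in t..(t + ε), ℓ (t + ε) := by
    apply intervalIntegral.integral_mono_on (by linarith) (hm.intervalIntegrable)
      intervalIntegrable_const
    intro x hx; exact hm hx.2
  simpa [intervalIntegral.integral_const, smul_eq_mul] using h1

lemma int_ge_aux (ℓ : ℝ → ℝ) (hm : Monotone ℓ) {ε : ℝ} (hε : 0 ≤ ε) (t : ℝ) :
    ε * ℓ t ≤ ∫ s in t..(t + ε), ℓ s := by
  have h1 : (∫ _ in t..(t + ε), ℓ t) ≤ ∫ s in t..(t + ε), ℓ s := by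
    apply intervalIntegral.integral_mono_on (by linarith) intervalIntegrable_const
      (hm.intervalIntegrable)
    intro x hx; exact hm hx.1
  simpa [intervalIntegral.integral_const, smul_eq_mul] using h1

lemma reg_ge (ℓ : ℝ → ℝ) (hm : Monotone ℓ) {ε : ℝ} (hε : 0 < ε) (t : ℝ) :
    ℓ t + ε * t ≤ reg ℓ ε t := by
  have h := int_ge_aux ℓ hm hε.le t
  have : ℓ t ≤ (1 / ε) * ∫ s in t..(t + ε), ℓ s := by
    rw [one_div, ← div_eq_inv_mul, le_div_iff₀ hε]
    linarith
  unfold reg; linarith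

lemma reg_le (ℓ : ℝ → ℝ) (hm : Monotone ℓ) {ε : ℝ} (hε : 0 < ε) (t : ℝ) :
    reg ℓ ε t ≤ ℓ (t + ε) + ε * t := by
  have h := int_le_aux ℓ hm hε.le t
  have : (1 / ε) * (∫ s in t..(t + ε), ℓ s) ≤ ℓ (t + ε) := by
    rw [one_div, ← div_eq_inv_mul, div_le_iff₀ hε]; linarith
  unfold reg; linarith

lemma reg_mono_eps (ℓ : ℝ → ℝ) (hm : Monotone ℓ) {ε ε' t : ℝ} (hε : 0 < ε) (hεε' : ε ≤ ε')
    (ht : 0 ≤ t) : reg ℓ ε t ≤ reg ℓ ε' t := by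
  have hε' : 0 < ε' := lt_of_lt_of_le hε hεε'
  set A := ∫ s in t..(t + ε), ℓ s with hA
  set B := ∫ s in (t + ε)..(t + ε'), ℓ s with hB
  have hsplit : (∫ s in t..(t + ε'), ℓ s) = A + B := by
    rw [hA, hB, intervalIntegral.integral_add_adjacent_intervals
      (hm.intervalIntegrable) (hm.intervalIntegrable)]
  have hAle : A ≤ ε * ℓ (t + ε) := int_le_aux ℓ hm hε.le t
  have hBge : (ε' - ε) * ℓ (t + ε) ≤ B := by
    have := int_ge_aux ℓ hm (by linarith : (0:ℝ) ≤ ε' - ε) (t + ε)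
    simpa [show t + ε + (ε' - ε) = t + ε' by ring] using this
  have key : ε' * A ≤ ε * (A + B) := by nlinarith
  have h1 : (1 / ε) * A ≤ (1 / ε') * (A + B) := by
    rw [div_mul_eq_mul_div, div_mul_eq_mul_div, div_le_div_iff₀ hε hε']
    nlinarith
  have h2 : ε * t ≤ ε' * t := mul_le_mul_of_nonneg_right hεε' ht
  unfold reg; rw [hsplit]; linarith


lemma reg_tendsto (ℓ : ℝ → ℝ) (hm : Monotone ℓ)
    (hrc : ∀ t : ℝ, ContinuousWithinAt ℓ (Set.Ici t) t) (t : ℝ) :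
    Tendsto (fun ε => reg ℓ ε t) (nhdsWithin 0 (Set.Ioi 0)) (nhds (ℓ t)) := by
  have hmem : ∀ᶠ ε in nhdsWithin (0:ℝ) (Set.Ioi 0), (0:ℝ) < ε :=
    eventually_mem_nhdsWithin
  have hεt : Tendsto (fun ε : ℝ => ε * t) (nhdsWithin 0 (Set.Ioi 0)) (nhds 0) := by
    have := (tendsto_id.mul_const t : Tendsto (fun ε : ℝ => ε * t) (nhds 0) (nhds (0 * t)))
    rw [zero_mul] at this
    exact this.mono_left nhdsWithin_le_nhds
  have hlow : Tendsto (fun ε : ℝ => ℓ t + ε * t) (nhdsWithin 0 (Set.Ioi 0)) (nhds (ℓ t)) := by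
    simpa using (tendsto_const_nhds.add hεt)
  have hcomp : Tendsto (fun ε : ℝ => t + ε) (nhdsWithin 0 (Set.Ioi 0))
      (nhdsWithin t (Set.Ici t)) := by
    rw [tendsto_nhdsWithin_iff]
    constructor
    · have := ((tendsto_const_nhds (x := t)).add
        (tendsto_id.mono_left nhdsWithin_le_nhds : Tendsto (fun ε : ℝ => ε)
          (nhdsWithin 0 (Set.Ioi 0)) (nhds 0)))
      simpa using this
    · exact hmem.mono fun ε hε => by simp [Set.mem_Ici]; linarith
  have hup : Tendsto (fun ε : ℝ => ℓ (t + ε) + ε * t) (nhdsWithin 0 (Set.Ioi 0))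
      (nhds (ℓ t)) := by
    simpa using (((hrc t).tendsto.comp hcomp).add hεt)
  refine tendsto_of_tendsto_of_tendsto_of_le_of_le' hlow hup ?_ ?_
  · exact hmem.mono fun ε hε => reg_ge ℓ hm hε t
  · exact hmem.mono fun ε hε => reg_le ℓ hm hε t


theorem etaEps_monotone_and_tendsto (ℓ : ℝ → ℝ) (hℓ : MemS ℓ)
    (ν c : ℝ) (hν : 0 < ν) (hc : 0 < c)
    (hfin : {t : ℝ | 0 ≤ t ∧ 1 < ν * t - c * reg ℓ 1 t}.Nonempty) :
    MonotoneOn (fun ε => etaEps ℓ ν c ε) (Set.Ioc (0 : ℝ) 1) ∧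
    Tendsto (fun ε => etaEps ℓ ν c ε) (nhdsWithin 0 (Set.Ioi 0)) (nhds (eta ℓ ν c)) ∧
    Tendsto (fun ε => reg ℓ ε (etaEps ℓ ν c ε)) (nhdsWithin 0 (Set.Ioi 0))
      (nhds (ℓ (eta ℓ ν c))) := by
  obtain ⟨-, -, hm, hrc, -⟩ := hℓ
  set S : ℝ → Set ℝ := fun ε => {t : ℝ | 0 ≤ t ∧ 1 < ν * t - c * reg ℓ ε t} with hS
  set T : Set ℝ := {t : ℝ | 0 ≤ t ∧ 1 < ν * t - c * ℓ t} with hT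
  have hbddS : ∀ ε, BddBelow (S ε) := fun ε => ⟨0, fun x hx => hx.1⟩
  have hbddT : BddBelow T := ⟨0, fun x hx => hx.1⟩
  -- antitone family of sets
  have hanti : ∀ {ε ε' : ℝ}, 0 < ε → ε ≤ ε' → S ε' ⊆ S ε := by
    intro ε ε' hε hεε' t ht
    refine ⟨ht.1, lt_of_lt_of_le ht.2 ?_⟩
    have := reg_mono_eps ℓ hm hε hεε' ht.1
    nlinarith
  have hsubT : ∀ {ε : ℝ}, 0 < ε → S ε ⊆ T := by
    intro ε hε t ht
    refine ⟨ht.1, lt_of_lt_of_le ht.2 ?_⟩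
    have h1 := reg_ge ℓ hm hε t
    have h2 : 0 ≤ ε * t := mul_nonneg hε.le ht.1
    nlinarith
  have hne : ∀ {ε : ℝ}, 0 < ε → ε ≤ 1 → (S ε).Nonempty := by
    intro ε hε hε1
    exact hfin.mono (hanti hε hε1)
  have hTne : T.Nonempty := hfin.mono (hsubT one_pos)
  -- η ≤ η^ε for ε ∈ (0,1]
  have hle : ∀ {ε : ℝ}, 0 < ε → ε ≤ 1 → eta ℓ ν c ≤ etaEps ℓ ν c ε := by
    intro ε hε hε1
    exact le_csInf (hne hε hε1) fun b hb => csInf_le hbddT (hsubT hε hb)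
  have hmemIoc : ∀ᶠ ε in nhdsWithin (0:ℝ) (Set.Ioi 0), ε ∈ Set.Ioc (0:ℝ) 1 := by
    have : Set.Ioc (0:ℝ) 1 ∈ nhdsWithin (0:ℝ) (Set.Ioi 0) :=
      Ioc_mem_nhdsGT_of_mem (by constructor <;> norm_num)
    exact this
  have hmono : MonotoneOn (fun ε => etaEps ℓ ν c ε) (Set.Ioc (0 : ℝ) 1) := by
    intro ε hε ε' hε' hεε'
    exact csInf_le_csInf (hbddS ε) (hne hε'.1 hε'.2) (hanti hε.1 hεε')
  -- the main tendsto
  have htend : Tendsto (fun ε => etaEps ℓ ν c ε) (nhdsWithin 0 (Set.Ioi 0))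
      (nhds (eta ℓ ν c)) := by
    rw [tendsto_order]
    constructor
    · intro a ha
      exact hmemIoc.mono fun ε hε => lt_of_lt_of_le ha (hle hε.1 hε.2)
    · intro a ha
      obtain ⟨t, htT, hta⟩ := (csInf_lt_iff hbddT hTne).1 ha
      have hreg : Tendsto (fun ε => ν * t - c * reg ℓ ε t) (nhdsWithin 0 (Set.Ioi 0))
          (nhds (ν * t - c * ℓ t)) :=
        tendsto_const_nhds.sub (tendsto_const_nhds.mul (reg_tendsto ℓ hm hrc t))
      have hev : ∀ᶠ ε in nhdsWithin (0:ℝ) (Set.Ioi 0), 1 < ν * t - c * reg ℓ ε t :=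
        hreg.eventually (eventually_gt_nhds htT.2)
      filter_upwards [hev] with ε hε
      exact lt_of_le_of_lt (csInf_le (hbddS ε) ⟨htT.1, hε⟩) hta
  refine ⟨hmono, htend, ?_⟩
  -- third limit via squeeze
  have hmem : ∀ᶠ ε in nhdsWithin (0:ℝ) (Set.Ioi 0), (0:ℝ) < ε := eventually_mem_nhdsWithin
  have hεid : Tendsto (fun ε : ℝ => ε) (nhdsWithin 0 (Set.Ioi 0)) (nhds 0) :=
    tendsto_id.mono_left nhdsWithin_le_nhds
  have hprod : Tendsto (fun ε => ε * etaEps ℓ ν c ε) (nhdsWithin 0 (Set.Ioi 0)) (nhds 0) := by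
    have := hεid.mul htend
    simpa using this
  have hetaIci : ∀ᶠ ε in nhdsWithin (0:ℝ) (Set.Ioi 0),
      etaEps ℓ ν c ε ∈ Set.Ici (eta ℓ ν c) :=
    hmemIoc.mono fun ε hε => hle hε.1 hε.2
  have hcomp1 : Tendsto (fun ε => etaEps ℓ ν c ε) (nhdsWithin 0 (Set.Ioi 0))
      (nhdsWithin (eta ℓ ν c) (Set.Ici (eta ℓ ν c))) := by
    rw [tendsto_nhdsWithin_iff]; exact ⟨htend, hetaIci⟩
  have hcomp2 : Tendsto (fun ε => etaEps ℓ ν c ε + ε) (nhdsWithin 0 (Set.Ioi 0))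
      (nhdsWithin (eta ℓ ν c) (Set.Ici (eta ℓ ν c))) := by
    rw [tendsto_nhdsWithin_iff]
    constructor
    · simpa using htend.add hεid
    · filter_upwards [hetaIci, hmem] with ε h1 h2
      simp only [Set.mem_Ici] at *
      linarith
  have hlow : Tendsto (fun ε => ℓ (etaEps ℓ ν c ε) + ε * etaEps ℓ ν c ε)
      (nhdsWithin 0 (Set.Ioi 0)) (nhds (ℓ (eta ℓ ν c))) := by
    simpa using ((hrc _).tendsto.comp hcomp1).add hprod
  have hup : Tendsto (fun ε => ℓ (etaEps ℓ ν c ε + ε) + ε * etaEps ℓ ν c ε)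
      (nhdsWithin 0 (Set.Ioi 0)) (nhds (ℓ (eta ℓ ν c))) := by
    simpa using ((hrc _).tendsto.comp hcomp2).add hprod
  refine tendsto_of_tendsto_of_tendsto_of_le_of_le' hlow hup ?_ ?_
  · exact hmem.mono fun ε hε => reg_ge ℓ hm hε _
  · exact hmem.mono fun ε hε => reg_le ℓ hm hε _
end
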